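/- Let (V, Φ) be a reduced irreducible root system with base Δ and let α ∈ Δ. If there exists w ∈ W_α such that w·α is Δ-dominant (i.e. dom(α) = dom_α(α)), then α is special or co-special. -/
import Mathlib


open scoped BigOperators

/-- A reduced irreducible root system, with a choice of base of simple roots,
in a finite-dimensional `ℚ`-vector space `V` equipped with a positive definite
symmetric bilinear form. -/
structure RootSystemBase (V : Type*) [AddCommGroup V] [Module ℚ V] : Type _ where
  /-- the symmetric bilinear form `( , )` -/
  B : V →ₗ[ℚ] V →ₗ[ℚ] ℚ
  B_symm : ∀ u v : V, B u v = B v u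
  B_posdef : ∀ v : V, v ≠ 0 → 0 < B v v
  /-- the (finite) set of roots -/
  Φ : Finset V
  zero_notMem : (0 : V) ∉ Φ
  span_top : Submodule.span ℚ (Φ : Set V) = ⊤
  reflect_mem : ∀ β ∈ Φ, ∀ γ ∈ Φ, γ - (2 * B β γ / B β β) • β ∈ Φ
  integral : ∀ β ∈ Φ, ∀ γ ∈ Φ, ∃ n : ℤ, 2 * B β γ / B β β = (n : ℚ)
  reduced : ∀ β ∈ Φ, ∀ c : ℚ, c • β ∈ Φ → c = 1 ∨ c = -1
  irreducible : ∀ s ⊆ Φ, s.Nonempty →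
    (∀ β ∈ s, ∀ γ ∈ Φ, γ ∉ s → B β γ = 0) → s = Φ
  /-- the base of simple roots -/
  Δ : Finset V
  Δ_sub : Δ ⊆ Φ
  Δ_indep : LinearIndependent ℚ (Subtype.val : {x : V // x ∈ Δ} → V)
  /-- `coord v α` is the coefficient of the simple root `α` when `v` is written in the basis `Δ` -/
  coord : V → V → ℚ
  coord_spec : ∀ v : V, v = ∑ α ∈ Δ, coord v α • α
  coord_int : ∀ β ∈ Φ, ∀ α ∈ Δ, ∃ n : ℤ, coord β α = (n : ℚ)
  pos_or_neg : ∀ β ∈ Φ, (∀ α ∈ Δ, 0 ≤ coord β α) ∨ (∀ α ∈ Δ, coord β α ≤ 0)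

namespace RootSystemBase

variable {V : Type*} [AddCommGroup V] [Module ℚ V] (P : RootSystemBase V)

/-- the coroot `β^∨ = 2β/(β,β)` -/
noncomputable def coroot (β : V) : V := (2 / P.B β β) • β

/-- `m^∨_β(α)`: the coefficient of `α^∨` when `β^∨` is written in the basis `Δ^∨` -/
noncomputable def corootMult (β α : V) : ℚ := P.coord (P.coroot β) α * (P.B α α / 2)

/-- the positive roots `Φ⁺` determined by the base `Δ` -/
noncomputable def posRoots : Finset V := P.Φ.filter (fun β => ∀ α ∈ P.Δ, 0 ≤ P.coord β α)

/-- a root is long if its length is maximal -/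
def IsLong (β : V) : Prop := ∀ γ ∈ P.Φ, P.B γ γ ≤ P.B β β

/-- a root is short if its length is minimal -/
def IsShort (β : V) : Prop := ∀ γ ∈ P.Φ, P.B β β ≤ P.B γ γ

/-- `h` is the highest root: every (positive) root has smaller multiplicities -/
def IsHighestRoot (h : V) : Prop :=
  h ∈ P.Φ ∧ ∀ β ∈ P.posRoots, ∀ α ∈ P.Δ, P.coord β α ≤ P.coord h α

/-- `h₂` is the root whose coroot is the highest root of the dual system `Φ^∨` -/
def IsDualHighest (h₂ : V) : Prop :=
  h₂ ∈ P.Φ ∧ ∀ β ∈ P.posRoots, ∀ α ∈ P.Δ, P.corootMult β α ≤ P.corootMult h₂ α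

/-- a simple root `α` is special if `m_{α^h}(α) = 1` -/
def IsSpecial (α : V) : Prop :=
  α ∈ P.Δ ∧ ∀ h : V, P.IsHighestRoot h → P.coord h α = 1

/-- a simple root `α` is co-special if `m^∨_{α^{h₂}}(α) = 1` -/
def IsCospecial (α : V) : Prop :=
  α ∈ P.Δ ∧ ∀ h₂ : V, P.IsDualHighest h₂ → P.corootMult h₂ α = 1

/-- the reflection `s_β` in a root `β` (junk value `id` if `(β,β) = 0`) -/
noncomputable def refl (β : V) : V ≃ₗ[ℚ] V :=
  if h : P.B β β ≠ 0 then
    Module.reflection (x := β) (f := (2 / P.B β β) • P.B β)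
      (by simp only [LinearMap.smul_apply, smul_eq_mul]; field_simp)
  else LinearEquiv.refl ℚ V

/-- the Weyl group `W`, as a group of linear automorphisms of `V` -/
noncomputable def weylGroup : Subgroup (V ≃ₗ[ℚ] V) :=
  Subgroup.closure { g | ∃ β ∈ P.Φ, g = P.refl β }

/-- the Weyl group `W_α` of the maximal Levi determined by `α ∈ Δ`, generated by the
simple reflections `s_{α'}`, `α' ∈ Δ \ {α}` -/
noncomputable def leviWeyl (α : V) : Subgroup (V ≃ₗ[ℚ] V) :=
  Subgroup.closure { g | ∃ α' ∈ P.Δ, α' ≠ α ∧ g = P.refl α' }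

/-- `v` is `Δ`-dominant -/
def IsDominant (v : V) : Prop := ∀ α ∈ P.Δ, 0 ≤ P.B v α

/-- `v` is `(Δ \ {α})`-dominant -/
def IsDominantAway (α v : V) : Prop := ∀ α' ∈ P.Δ, α' ≠ α → 0 ≤ P.B v α'

/-- `χ` is quasi-constant -/
def IsQuasiConstant (χ : V) : Prop :=
  ∀ β ∈ P.Φ, P.B χ (P.coroot β) ≠ 0 → ∀ w ∈ P.weylGroup,
    P.B χ (w (P.coroot β)) / P.B χ (P.coroot β) ∈ ({-1, 0, 1} : Set ℚ)

end RootSystemBase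

section AuxLemmas

namespace RootSystemBase

variable {V : Type*} [AddCommGroup V] [Module ℚ V] (P : RootSystemBase V)

lemma B_nonneg (v : V) : 0 ≤ P.B v v := by
  rcases eq_or_ne v 0 with h | h
  · simp [h]
  · exact (P.B_posdef v h).le

lemma root_ne_zero {β : V} (hβ : β ∈ P.Φ) : β ≠ 0 := by
  rintro rfl; exact P.zero_notMem hβ

lemma B_root_pos {β : V} (hβ : β ∈ P.Φ) : 0 < P.B β β :=
  P.B_posdef β (P.root_ne_zero hβ)

lemma B_root_ne {β : V} (hβ : β ∈ P.Φ) : P.B β β ≠ 0 :=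
  (P.B_root_pos hβ).ne'

lemma coord_unique (f : V → ℚ) (h : ∑ a ∈ P.Δ, f a • a = 0) : ∀ a ∈ P.Δ, f a = 0 := by
  intro a ha
  have h2 : ∑ i : {x : V // x ∈ P.Δ}, f i.val • i.val = 0 := by
    rw [Finset.sum_coe_sort P.Δ (fun x => f x • x)]; exact h
  have := (Fintype.linearIndependent_iff.mp P.Δ_indep) (fun i => f i.val) h2 ⟨a, ha⟩
  exact this

lemma coord_eq (v : V) (g : V → ℚ) (h : v = ∑ a ∈ P.Δ, g a • a) :
    ∀ a ∈ P.Δ, P.coord v a = g a := by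
  intro a ha
  have h0 : ∑ a ∈ P.Δ, (P.coord v a - g a) • a = 0 := by
    simp only [sub_smul, Finset.sum_sub_distrib]
    rw [← P.coord_spec v, ← h, sub_self]
  have := P.coord_unique (fun a => P.coord v a - g a) h0 a ha
  linarith

lemma coord_delta {a b : V} (ha : a ∈ P.Δ) (hb : b ∈ P.Δ) :
    (a = b → P.coord b a = 1) ∧ (a ≠ b → P.coord b a = 0) := by
  classical
  have key := P.coord_eq b (fun x => if x = b then 1 else 0) ?_ a ha
  · constructor
    · intro h; simpa [h] using key
    · intro h; simpa [h] using key
  · rw [show (∑ a ∈ P.Δ, (fun x => if x = b then (1:ℚ) else 0) a • a)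
        = ∑ a ∈ P.Δ, (if a = b then ((1:ℚ) • a) else 0) from by
      apply Finset.sum_congr rfl; intro x _; by_cases h : x = b <;> simp [h]]
    rw [Finset.sum_ite_eq' P.Δ b (fun x => (1:ℚ) • x)]
    simp [hb]

lemma coord_self {a : V} (ha : a ∈ P.Δ) : P.coord a a = 1 :=
  (P.coord_delta ha ha).1 rfl

lemma coord_of_ne {a b : V} (ha : a ∈ P.Δ) (hb : b ∈ P.Δ) (h : a ≠ b) : P.coord b a = 0 :=
  (P.coord_delta ha hb).2 h

lemma coord_smul (c : ℚ) (v : V) {a : V} (ha : a ∈ P.Δ) :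
    P.coord (c • v) a = c * P.coord v a := by
  refine P.coord_eq (c • v) (fun x => c * P.coord v x) ?_ a ha
  calc c • v = c • ∑ x ∈ P.Δ, P.coord v x • x := by rw [← P.coord_spec v]
    _ = ∑ x ∈ P.Δ, (c * P.coord v x) • x := by rw [Finset.smul_sum]; simp [mul_smul]

lemma refl_apply {β : V} (hβ : P.B β β ≠ 0) (v : V) :
    P.refl β v = v - (2 * P.B β v / P.B β β) • β := by
  rw [RootSystemBase.refl, dif_pos hβ, Module.reflection_apply]
  congr 1
  simp only [LinearMap.smul_apply, smul_eq_mul]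
  ring_nf

lemma refl_isom (β : V) (u v : V) : P.B (P.refl β u) (P.refl β v) = P.B u v := by
  by_cases hβ : P.B β β ≠ 0
  · rw [P.refl_apply hβ, P.refl_apply hβ]
    simp only [map_sub, map_smul, LinearMap.sub_apply, LinearMap.smul_apply, smul_eq_mul]
    have h1 : P.B u β = P.B β u := P.B_symm u β
    field_simp
    ring_nf
    rw [h1]
    ring
  · rw [RootSystemBase.refl, dif_neg hβ]; rfl

lemma refl_inv {β : V} (hβ : P.B β β ≠ 0) : (P.refl β)⁻¹ = P.refl β := by
  rw [RootSystemBase.refl, dif_pos hβ]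
  exact Module.reflection_symm _

lemma weyl_isom {w : V ≃ₗ[ℚ] V} (hw : w ∈ P.weylGroup) :
    ∀ u v : V, P.B (w u) (w v) = P.B u v := by
  induction hw using Subgroup.closure_induction with
  | mem x hx =>
    obtain ⟨β, _, rfl⟩ := hx
    exact P.refl_isom β
  | one => intro u v; rfl
  | mul x y hx hy ihx ihy =>
    intro u v
    have hxy : ∀ z, (x * y) z = x (y z) := fun z => rfl
    rw [hxy, hxy, ihx, ihy]
  | inv x hx ih =>
    intro u v
    have h := ih (x⁻¹ u) (x⁻¹ v)
    have e1 : x (x⁻¹ u) = u := x.apply_symm_apply u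
    have e2 : x (x⁻¹ v) = v := x.apply_symm_apply v
    rw [e1, e2] at h
    exact h.symm

lemma weyl_mapsPhi {w : V ≃ₗ[ℚ] V} (hw : w ∈ P.weylGroup) :
    ∀ γ ∈ P.Φ, w γ ∈ P.Φ := by
  have key : ∀ γ ∈ P.Φ, w γ ∈ P.Φ ∧ w⁻¹ γ ∈ P.Φ := by
    induction hw using Subgroup.closure_induction with
    | mem x hx =>
      obtain ⟨β, hβ, rfl⟩ := hx
      have hne := P.B_root_ne hβ
      have hmap : ∀ γ ∈ P.Φ, P.refl β γ ∈ P.Φ := by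
        intro γ hγ
        rw [P.refl_apply hne]
        exact P.reflect_mem β hβ γ hγ
      intro γ hγ
      refine ⟨hmap γ hγ, ?_⟩
      rw [P.refl_inv hne]
      exact hmap γ hγ
    | one => intro γ hγ; exact ⟨hγ, hγ⟩
    | mul x y hx hy ihx ihy =>
      intro γ hγ
      constructor
      · exact (ihx _ ((ihy γ hγ).1)).1
      · have : (x * y)⁻¹ γ = y⁻¹ (x⁻¹ γ) := rfl
        rw [this]
        exact (ihy _ ((ihx γ hγ).2)).2
    | inv x hx ih =>
      intro γ hγ
      refine ⟨(ih γ hγ).2, ?_⟩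
      have : (x⁻¹)⁻¹ = x := inv_inv x
      rw [this]
      exact (ih γ hγ).1
  exact fun γ hγ => (key γ hγ).1

lemma levi_le_weyl (α : V) : P.leviWeyl α ≤ P.weylGroup := by
  rw [RootSystemBase.leviWeyl]
  apply Subgroup.closure_le _ |>.mpr
  rintro g ⟨α', hα', _, rfl⟩
  exact Subgroup.subset_closure ⟨α', P.Δ_sub hα', rfl⟩

lemma levi_coord {α : V} (hα : α ∈ P.Δ) {w : V ≃ₗ[ℚ] V} (hw : w ∈ P.leviWeyl α) :
    ∀ v : V, P.coord (w v) α = P.coord v α := by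
  induction hw using Subgroup.closure_induction with
  | mem x hx =>
    obtain ⟨α', hα', hne, rfl⟩ := hx
    intro v
    have hne' := P.B_root_ne (P.Δ_sub hα')
    rw [P.refl_apply hne']
    set c := 2 * P.B α' v / P.B α' α'
    have : v - c • α' = ∑ a ∈ P.Δ, (P.coord v a - c * P.coord α' a) • a := by
      simp only [sub_smul, Finset.sum_sub_distrib, mul_smul]
      rw [← P.coord_spec v, ← Finset.smul_sum, ← P.coord_spec α']
    rw [P.coord_eq _ _ this α hα, P.coord_of_ne hα hα' (fun h => hne h.symm)]
    ring
  | one => intro v; rfl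
  | mul x y hx hy ihx ihy =>
    intro v
    have hxy : (x * y) v = x (y v) := rfl
    rw [hxy, ihx, ihy]
  | inv x hx ih =>
    intro v
    have h := ih (x⁻¹ v)
    have e : x (x⁻¹ v) = v := x.apply_symm_apply v
    rw [e] at h
    exact h.symm

lemma cauchySchwarz (u v : V) : (P.B u v)^2 ≤ P.B u u * P.B v v := by
  rcases eq_or_ne v 0 with rfl | hv
  · simp
  have hvv : 0 < P.B v v := P.B_posdef v hv
  have hz := P.B_nonneg (P.B v v • u - P.B u v • v)
  simp only [map_sub, map_smul, LinearMap.sub_apply, LinearMap.smul_apply, smul_eq_mul] at hz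
  have hsymm : P.B v u = P.B u v := P.B_symm v u
  rw [hsymm] at hz
  nlinarith [hz, hvv, sq_nonneg (P.B u v)]

lemma cauchySchwarz_eq {u v : V} (h : (P.B u v)^2 = P.B u u * P.B v v) :
    P.B v v • u = P.B u v • v := by
  rcases eq_or_ne v 0 with rfl | hv
  · simp
  have hvv : 0 < P.B v v := P.B_posdef v hv
  by_contra hne
  have hz : 0 < P.B (P.B v v • u - P.B u v • v) (P.B v v • u - P.B u v • v) :=
    P.B_posdef _ (sub_ne_zero.mpr hne)
  simp only [map_sub, map_smul, LinearMap.sub_apply, LinearMap.smul_apply, smul_eq_mul] at hz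
  have hsymm : P.B v u = P.B u v := P.B_symm v u
  rw [hsymm] at hz
  nlinarith [hz, hvv, h]

/-- comparison lemma: a dominant vector `x` equals any `y` with `y - x` a nonnegative
combination of simple roots and `(y,y) ≤ (x,x)`. -/
lemma comparison {x y : V} (hx : x ≠ 0) (hdom : ∀ a ∈ P.Δ, 0 ≤ P.B x a)
    (hc : ∀ a ∈ P.Δ, P.coord x a ≤ P.coord y a) (hlen : P.B y y ≤ P.B x x) : y = x := by
  have hxx : 0 < P.B x x := P.B_posdef x hx
  -- (y - x, x) ≥ 0
  have hyx : P.B x x ≤ P.B y x := by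
    have hrepr : y - x = ∑ a ∈ P.Δ, (P.coord y a - P.coord x a) • a := by
      simp only [sub_smul, Finset.sum_sub_distrib]
      rw [← P.coord_spec y, ← P.coord_spec x]
    have h0 : 0 ≤ P.B (y - x) x := by
      rw [hrepr]
      simp only [map_sum, LinearMap.sum_apply, LinearMap.smul_apply, map_smul, smul_eq_mul]
      apply Finset.sum_nonneg
      intro a ha
      have h1 : 0 ≤ P.coord y a - P.coord x a := sub_nonneg.mpr (hc a ha)
      have h2 : 0 ≤ P.B a x := by rw [P.B_symm a x]; exact hdom a ha
      positivity
    have := P.B_symm y x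
    simp only [map_sub, LinearMap.sub_apply] at h0
    linarith
  have hcs := P.cauchySchwarz y x
  have hxy : P.B y x = P.B x x := by nlinarith
  have hyy : P.B y y = P.B x x := by nlinarith
  have heq : (P.B y x)^2 = P.B y y * P.B x x := by rw [hxy, hyy]; ring
  have := P.cauchySchwarz_eq heq
  rw [hxy] at this
  exact smul_right_injective V hxx.ne' this

/-- In an irreducible system, for any root `x` and nonzero vector `y`, there is a root
of the same length as `x` not orthogonal to `y` (via the Weyl orbit of `x` spanning `V`). -/
lemma orbit_spanning {x : V} (hx : x ∈ P.Φ) {y : V} (hy : y ≠ 0) :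
    ∃ x' ∈ P.Φ, P.B x' x' = P.B x x ∧ P.B x' y ≠ 0 := by
  classical
  set S : Set V := {v | ∃ w ∈ P.weylGroup, v = w x} with hS
  set U : Submodule ℚ V := Submodule.span ℚ S with hU
  have hstable : ∀ w ∈ P.weylGroup, ∀ u ∈ U, w u ∈ U := by
    intro w hw u hu
    have hle : Submodule.map (w : V →ₗ[ℚ] V) U ≤ U := by
      rw [hU, Submodule.map_span]
      apply Submodule.span_mono
      rintro _ ⟨v, ⟨w', hw', rfl⟩, rfl⟩
      exact ⟨w * w', mul_mem hw hw', rfl⟩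
    exact hle ⟨u, hu, rfl⟩
  have hUtop : U = ⊤ := by
    have hsub : P.Φ.filter (fun γ => γ ∈ U) = P.Φ := by
      apply P.irreducible _ (Finset.filter_subset _ _)
      · exact ⟨x, Finset.mem_filter.mpr ⟨hx,
          Submodule.subset_span ⟨1, one_mem _, rfl⟩⟩⟩
      · intro β hβ γ hγ hγs
        by_contra hBne
        apply hγs
        refine Finset.mem_filter.mpr ⟨hγ, ?_⟩
        have hβU : β ∈ U := (Finset.mem_filter.mp hβ).2
        have hγγ := P.B_root_ne hγ
        have hrefl : P.refl γ ∈ P.weylGroup := Subgroup.subset_closure ⟨γ, hγ, rfl⟩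
        have hsβ : P.refl γ β ∈ U := hstable _ hrefl β hβU
        have hexpr : P.refl γ β = β - (2 * P.B γ β / P.B γ γ) • γ := P.refl_apply hγγ β
        have hγβ : P.B γ β ≠ 0 := by rw [P.B_symm γ β]; exact hBne
        have hc : (2 * P.B γ β / P.B γ γ) ≠ 0 :=
          div_ne_zero (mul_ne_zero two_ne_zero hγβ) hγγ
        have hmem : (2 * P.B γ β / P.B γ γ) • γ ∈ U := by
          have : (2 * P.B γ β / P.B γ γ) • γ = β - P.refl γ β := by rw [hexpr]; abel
          rw [this]
          exact sub_mem hβU hsβ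
        have := Submodule.smul_mem U (2 * P.B γ β / P.B γ γ)⁻¹ hmem
        rwa [smul_smul, inv_mul_cancel₀ hc, one_smul] at this
    apply top_unique
    calc (⊤ : Submodule ℚ V) = Submodule.span ℚ (P.Φ : Set V) := P.span_top.symm
      _ ≤ U := by
        apply Submodule.span_le.mpr
        intro γ hγ
        have hγ' : γ ∈ P.Φ := hγ
        have h2 : γ ∈ P.Φ.filter (fun γ => γ ∈ U) := by rw [hsub]; exact hγ'
        exact (Finset.mem_filter.mp h2).2
  by_contra hcon
  push_neg at hcon
  have hker : ∀ v ∈ S, P.B y v = 0 := by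
    rintro _ ⟨w, hw, rfl⟩
    have h1 : w x ∈ P.Φ := P.weyl_mapsPhi hw x hx
    have h2 : P.B (w x) (w x) = P.B x x := P.weyl_isom hw x x
    rw [P.B_symm]
    exact hcon _ h1 h2
  have hle : U ≤ LinearMap.ker (P.B y) := Submodule.span_le.mpr (fun v hv => hker v hv)
  have hyy : P.B y y = 0 := hle (hUtop ▸ Submodule.mem_top)
  exact (P.B_posdef y hy).ne' hyy

/-- length ratio of non-orthogonal roots of different lengths is 2 or 3 -/
lemma ratio {x y : V} (hx : x ∈ P.Φ) (hy : y ∈ P.Φ) (hne : P.B x y ≠ 0)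
    (hlt : P.B x x < P.B y y) : P.B y y = 2 * P.B x x ∨ P.B y y = 3 * P.B x x := by
  obtain ⟨n, hn⟩ := P.integral x hx y hy
  obtain ⟨m, hm⟩ := P.integral y hy x hx
  have hxx := P.B_root_pos hx
  have hyy := P.B_root_pos hy
  have hsym : P.B y x = P.B x y := P.B_symm y x
  rw [hsym] at hm
  -- not parallel, so strict Cauchy-Schwarz
  have hcs : (P.B x y)^2 < P.B x x * P.B y y := by
    rcases lt_or_eq_of_le (P.cauchySchwarz x y) with h | h
    · exact h
    · exfalso
      have hpar := P.cauchySchwarz_eq h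
      have hxc : x = (P.B x y / P.B y y) • y := by
        have h1 : ((P.B y y)⁻¹ * P.B y y) • x = ((P.B y y)⁻¹ * P.B x y) • y := by
          rw [mul_smul, mul_smul, hpar]
        rw [inv_mul_cancel₀ hyy.ne', one_smul] at h1
        refine h1.trans ?_
        rw [div_eq_inv_mul]
      have hred := P.reduced y hy _ (hxc ▸ hx)
      have hxxval : P.B x x = (P.B x y / P.B y y)^2 * P.B y y := by
        conv_lhs => rw [hxc]
        simp only [map_smul, LinearMap.smul_apply, smul_eq_mul]
        ring
      rcases hred with h1 | h1 <;> rw [h1] at hxxval <;> nlinarith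
  have hq : (n:ℚ) * m * (P.B x x * P.B y y) = 4 * (P.B x y)^2 := by
    have e1 : (n:ℚ) * P.B x x = 2 * P.B x y := by
      rw [← hn]; field_simp
    have e2 : (m:ℚ) * P.B y y = 2 * P.B x y := by
      rw [← hm]; field_simp
    calc (n:ℚ) * m * (P.B x x * P.B y y) = ((n:ℚ) * P.B x x) * ((m:ℚ) * P.B y y) := by ring
      _ = (2 * P.B x y) * (2 * P.B x y) := by rw [e1, e2]
      _ = 4 * (P.B x y)^2 := by ring
  have hxy2 : 0 < (P.B x y)^2 := lt_of_le_of_ne (sq_nonneg _) (Ne.symm (pow_ne_zero 2 hne))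
  have hnmposQ : 0 < (n:ℚ) * m := by
    nlinarith [hq, hxy2, mul_pos hxx hyy]
  have hnmlt4Q : (n:ℚ) * m < 4 := by
    by_contra hgt
    push_neg at hgt
    have : 4 * (P.B x x * P.B y y) ≤ (n:ℚ)*m*(P.B x x * P.B y y) := by
      apply mul_le_mul_of_nonneg_right hgt (by positivity)
    rw [hq] at this
    nlinarith
  have hnmpos : 0 < n * m := by exact_mod_cast (by push_cast; exact hnmposQ : (0:ℚ) < ((n*m : ℤ) : ℚ))
  have hnm3 : n * m ≤ 3 := by
    have : ((n*m : ℤ) : ℚ) < 4 := by push_cast; exact hnmlt4Q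
    exact_mod_cast Int.lt_add_one_iff.mp (by exact_mod_cast this)
  -- m² < n·m
  have hmne : m ≠ 0 := by
    intro h0
    rw [h0] at hm
    simp at hm
    rcases hm with h | h
    · exact hne h
    · exact hyy.ne' h
  have hm2 : (1:ℤ) ≤ m^2 := by
    rcases hmne.lt_or_gt with h | h
    · nlinarith
    · nlinarith
  have hkey : ((m^2 : ℤ):ℚ) * P.B y y = ((n*m : ℤ):ℚ) * P.B x x := by
    have e1 : (n:ℚ) * P.B x x = 2 * P.B x y := by rw [← hn]; field_simp
    have e2 : (m:ℚ) * P.B y y = 2 * P.B x y := by rw [← hm]; field_simp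
    push_cast
    calc (m:ℚ)^2 * P.B y y = (m:ℚ) * ((m:ℚ) * P.B y y) := by ring
      _ = (m:ℚ) * ((n:ℚ) * P.B x x) := by rw [e1, e2]
      _ = (n:ℚ) * (m:ℚ) * P.B x x := by ring
  have hm2lt : m^2 < n*m := by
    have hQ : ((m^2:ℤ):ℚ) < ((n*m:ℤ):ℚ) := by
      by_contra hge
      push_neg at hge
      have h1 : ((n*m:ℤ):ℚ) * P.B x x < ((n*m:ℤ):ℚ) * P.B y y := by
        apply mul_lt_mul_of_pos_left hlt
        exact_mod_cast hnmpos
      have h2 : ((n*m:ℤ):ℚ) * P.B y y ≤ ((m^2:ℤ):ℚ) * P.B y y := by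
        apply mul_le_mul_of_nonneg_right hge hyy.le
      rw [hkey] at h2
      linarith
    exact_mod_cast hQ
  have hmle2 : m^2 ≤ 2 := by omega
  have hmb1 : m ≤ 1 := by nlinarith [sq_nonneg (m - 2)]
  have hmb2 : -1 ≤ m := by nlinarith [sq_nonneg (m + 2)]
  have hmcase : m = -1 ∨ m = 0 ∨ m = 1 := by omega
  have hm21 : m^2 = 1 := by
    rcases hmcase with rfl | rfl | rfl
    · norm_num
    · exact absurd rfl hmne
    · norm_num
  have hnm23 : n*m = 2 ∨ n*m = 3 := by omega
  have hfin : P.B y y = ((n*m : ℤ):ℚ) * P.B x x := by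
    have := hkey
    rw [hm21] at this
    push_cast at this ⊢
    linarith
  rcases hnm23 with h | h <;> rw [h] at hfin
  · left; exact_mod_cast hfin
  · right; exact_mod_cast hfin

lemma no_three_lengths {x y z : V} (hx : x ∈ P.Φ) (hy : y ∈ P.Φ) (hz : z ∈ P.Φ)
    (h1 : P.B x x < P.B y y) (h2 : P.B y y < P.B z z) : False := by
  have hx0 := P.root_ne_zero hx
  have hy0 := P.root_ne_zero hy
  obtain ⟨y', hy', hyl, hyn⟩ := P.orbit_spanning hy hx0
  have r1 := P.ratio hx hy' (by rw [P.B_symm]; exact hyn) (by rw [hyl]; exact h1)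
  rw [hyl] at r1
  obtain ⟨z', hz', hzl, hzn⟩ := P.orbit_spanning hz hx0
  have r2 := P.ratio hx hz' (by rw [P.B_symm]; exact hzn) (by rw [hzl]; exact h1.trans h2)
  rw [hzl] at r2
  obtain ⟨z'', hz'', hzl2, hzn2⟩ := P.orbit_spanning hz hy0
  have r3 := P.ratio hy hz'' (by rw [P.B_symm]; exact hzn2) (by rw [hzl2]; exact h2)
  rw [hzl2] at r3
  have hxx := P.B_root_pos hx
  rcases r1 with e|e <;> rcases r2 with f|f <;> rcases r3 with g|g <;> linarith

end RootSystemBase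
end AuxLemmas



open RootSystemBase in
/-- If there exists `w ∈ W_α` with `w α` `Δ`-dominant (i.e. `dom(α) = dom_α(α)`),
then `α` is special or co-special. -/
theorem special_or_cospecial_of_leviDominant
    {V : Type*} [AddCommGroup V] [Module ℚ V] [FiniteDimensional ℚ V]
    (P : RootSystemBase V) (α : V) (hα : α ∈ P.Δ)
    (hdom : ∃ w ∈ P.leviWeyl α, P.IsDominant (w α)) :
    P.IsSpecial α ∨ P.IsCospecial α := by
  classical
  obtain ⟨w, hwL, hdomw⟩ := hdom
  have hwW : w ∈ P.weylGroup := P.levi_le_weyl α hwL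
  set β := w α with hβdef
  have hαΦ : α ∈ P.Φ := P.Δ_sub hα
  have hβΦ : β ∈ P.Φ := P.weyl_mapsPhi hwW α hαΦ
  have hβα : P.coord β α = 1 := by
    rw [hβdef, P.levi_coord hα hwL α, P.coord_self hα]
  have hαα : 0 < P.B α α := P.B_root_pos hαΦ
  have hββ : P.B β β = P.B α α := P.weyl_isom hwW α α
  have hβpos : β ∈ P.posRoots := by
    rw [RootSystemBase.posRoots, Finset.mem_filter]
    refine ⟨hβΦ, ?_⟩
    rcases P.pos_or_neg β hβΦ with h | h
    · exact h
    · exfalso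
      have := h α hα
      rw [hβα] at this
      linarith
  have hcorootβ : P.coroot β = (2 / P.B α α) • β := by
    rw [RootSystemBase.coroot, hββ]
  have hcmβα : P.corootMult β α = 1 := by
    rw [RootSystemBase.corootMult, hcorootβ, P.coord_smul _ _ hα, hβα]
    field_simp
  by_cases hlong : ∀ γ ∈ P.Φ, P.B γ γ ≤ P.B β β
  · left
    refine ⟨hα, ?_⟩
    rintro h ⟨hhΦ, hhmax⟩
    have heq : h = β :=
      P.comparison (P.root_ne_zero hβΦ) hdomw (fun a ha => hhmax β hβpos a ha) (hlong h hhΦ)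
    rw [heq, hβα]
  · right
    refine ⟨hα, ?_⟩
    push_neg at hlong
    obtain ⟨γ₀, hγ₀Φ, hγ₀⟩ := hlong
    rintro h₂ ⟨hh₂Φ, hh₂max⟩
    have hββpos : 0 < P.B β β := P.B_root_pos hβΦ
    have hh₂pos : 0 < P.B h₂ h₂ := P.B_root_pos hh₂Φ
    have hlen : P.B β β ≤ P.B h₂ h₂ := by
      by_contra hcon
      push_neg at hcon
      exact P.no_three_lengths hh₂Φ hβΦ hγ₀Φ hcon hγ₀
    have hxne : P.coroot β ≠ 0 := by
      rw [RootSystemBase.coroot]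
      intro hzz
      rcases smul_eq_zero.mp hzz with h | h
      · exact (div_ne_zero two_ne_zero hββpos.ne') h
      · exact P.root_ne_zero hβΦ h
    have hxdom : ∀ a ∈ P.Δ, 0 ≤ P.B (P.coroot β) a := by
      intro a ha
      rw [RootSystemBase.coroot]
      simp only [map_smul, LinearMap.smul_apply, smul_eq_mul]
      have h1 : 0 ≤ P.B β a := hdomw a ha
      have h2 : 0 ≤ 2 / P.B β β := by positivity
      exact mul_nonneg h2 h1
    have hcoordle : ∀ a ∈ P.Δ, P.coord (P.coroot β) a ≤ P.coord (P.coroot h₂) a := by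
      intro a ha
      have hle := hh₂max β hβpos a ha
      have haa : 0 < P.B a a := P.B_root_pos (P.Δ_sub ha)
      rw [RootSystemBase.corootMult, RootSystemBase.corootMult] at hle
      have hhalf : 0 < P.B a a / 2 := by positivity
      exact le_of_mul_le_mul_right hle hhalf
    have hxlen : P.B (P.coroot h₂) (P.coroot h₂) ≤ P.B (P.coroot β) (P.coroot β) := by
      rw [RootSystemBase.coroot, RootSystemBase.coroot]
      simp only [map_smul, LinearMap.smul_apply, smul_eq_mul]
      have e1 : 2 / P.B h₂ h₂ * (2 / P.B h₂ h₂ * P.B h₂ h₂) = 4 / P.B h₂ h₂ := by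
        field_simp; ring
      have e2 : 2 / P.B β β * (2 / P.B β β * P.B β β) = 4 / P.B β β := by
        field_simp; ring
      rw [e1, e2]
      apply div_le_div_of_nonneg_left (by norm_num) hββpos hlen
    have heq : P.coroot h₂ = P.coroot β := P.comparison hxne hxdom hcoordle hxlen
    rw [RootSystemBase.corootMult, heq]
    rw [RootSystemBase.corootMult, hcorootβ, P.coord_smul _ _ hα, hβα] at hcmβα
    rw [hcorootβ, P.coord_smul _ _ hα, hβα]
    exact hcmβα
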